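/- Let p be an odd prime. A metric p-group (A, q) has trivial intersection of its maximal isotropic subgroups if and only if (A, q) is either generated by its isotropic elements or anisotropic. -/

import Mathlib

/-!
The intersection of the maximal isotropic subgroups is the radical `B ⊓ Bᗮ` of the span `B` of
the isotropic elements: every isotropic element lies in a maximal isotropic subgroup, and an
element of `B ⊓ Bᗮ` is isotropic (`q r ^ 2 = b(r, r) = 1` and `p` is odd), so it can be adjoined
to any isotropic subgroup.

Suppose the radical vanishes and some `x ≠ 0` is isotropic. An isotropic `y` with `b(x, y) ≠ 1`
gives `q (i • x + y) = b(x, y) ^ i`, and these values exhaust the `p`-th roots of unity. So an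
element `c ∈ Bᗮ` of order `p` has `q (b + c) = 1` for some `b ∈ B`, whence `c ∈ B ⊓ Bᗮ = 0`;
thus `Bᗮ = 0`. Then `x ↦ b(·, x)` embeds `A` into the characters of `B`, and Dedekind's
independence of characters gives `|A| ≤ |B|`, i.e. `B = A`.
-/

/-- The bilinear form associated to a quadratic form `q : A → kˣ`. -/
def Bform {A k : Type*} [AddCommGroup A] [Field k] (q : A → kˣ) (x y : A) : kˣ :=
  q (x + y) * (q x * q y)⁻¹

/-- `q : A → kˣ` is a quadratic form: `q(-x) = q(x)` and its associated form is bilinear. -/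
def IsQuadraticForm {A k : Type*} [AddCommGroup A] [Field k] (q : A → kˣ) : Prop :=
  (∀ x, q (-x) = q x) ∧ ∀ x y z, Bform q (x + y) z = Bform q x z * Bform q y z

/-- Non-degeneracy of the bilinear form associated to `q`. -/
def Nondeg {A k : Type*} [AddCommGroup A] [Field k] (q : A → kˣ) : Prop :=
  ∀ x, (∀ y, Bform q x y = 1) → x = 0

theorem card_le_card_of_injective_monoidHom {X G L : Type*} [Finite X] [MulOneClass G] [Finite G]
    [CommRing L] [IsDomain L] (χ : X → G →* Lˣ) (hχ : Function.Injective χ) :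
    Nat.card X ≤ Nat.card G := by
  cases nonempty_fintype X
  cases nonempty_fintype G
  have hli := (linearIndependent_monoidHom G L).comp (fun x => (Units.coeHom L).comp (χ x))
    fun x y hxy => hχ ((MonoidHom.cancel_left Units.val_injective).1 hxy)
  simpa [Module.finrank_fintype_fun_eq_card, Nat.card_eq_fintype_card] using
    hli.fintype_card_le_finrank

theorem Units.mem_zpowers_of_pow_prime_eq_one {K : Type*} [CommRing K] [IsDomain K]
    {p m : ℕ} (hp : p.Prime) {s ζ : Kˣ} (hs : s ≠ 1) (hsm : s ^ p ^ m = 1) (hζ : ζ ^ p = 1) :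
    ζ ∈ Subgroup.zpowers s := by
  obtain ⟨j, -, hj⟩ := (Nat.dvd_prime_pow hp).1 (orderOf_dvd_of_pow_eq_one hsm)
  have hj0 : j ≠ 0 := by
    rintro rfl
    exact hs (orderOf_eq_one_iff.1 (by rw [hj, pow_zero]))
  have : NeZero (orderOf s) := ⟨hj ▸ (pow_pos hp.pos j).ne'⟩
  rw [(IsPrimitiveRoot.orderOf s).zpowers_eq, mem_rootsOfUnity, hj]
  exact orderOf_dvd_iff_pow_eq_one.1 ((orderOf_dvd_of_pow_eq_one hζ).trans (dvd_pow_self p hj0))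

section PGroup

variable {A : Type*} [AddCommGroup A] {p : ℕ} [Fact p.Prime]

theorem IsPGroup.exists_addOrderOf_eq_prime_pow (hpA : IsPGroup p (Multiplicative A)) (x : A) :
    ∃ k, addOrderOf x = p ^ k := by
  simpa [orderOf_ofAdd_eq_addOrderOf] using IsPGroup.iff_orderOf.1 hpA (Multiplicative.ofAdd x)

theorem IsPGroup.exists_nsmul_ne_zero_and_prime_nsmul_eq_zero
    (hpA : IsPGroup p (Multiplicative A)) {c : A} (hc : c ≠ 0) :
    ∃ n : ℕ, n • c ≠ 0 ∧ p • n • c = 0 := by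
  obtain ⟨k, hk⟩ := hpA.exists_addOrderOf_eq_prime_pow c
  have hp := (Fact.out : p.Prime)
  have hk0 : k ≠ 0 := by
    rintro rfl
    exact hc (AddMonoid.addOrderOf_eq_one_iff.1 (by rw [hk, pow_zero]))
  refine ⟨p ^ (k - 1), nsmul_ne_zero_of_lt_addOrderOf (pow_pos hp.pos _).ne' ?_, ?_⟩
  · exact hk ▸ Nat.pow_lt_pow_right hp.one_lt (Nat.sub_lt (Nat.pos_of_ne_zero hk0) one_pos)
  · rw [smul_smul, ← pow_succ', Nat.sub_add_cancel (Nat.one_le_iff_ne_zero.2 hk0), ← hk,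
      addOrderOf_nsmul_eq_zero]

end PGroup

section QuadraticForm

variable {A k : Type*} [AddCommGroup A] [Field k] {q : A → kˣ}

theorem bform_comm (q : A → kˣ) (x y : A) : Bform q x y = Bform q y x := by
  unfold Bform
  rw [add_comm, mul_comm (q x)]

theorem apply_add_eq_mul_bform (q : A → kˣ) (x y : A) : q (x + y) = q x * q y * Bform q x y := by
  unfold Bform
  rw [mul_comm (q (x + y)), mul_inv_cancel_left]

namespace IsQuadraticForm

def bformHom (hq : IsQuadraticForm q) (z : A) : A →+ Additive kˣ :=
  AddMonoidHom.mk' (fun x => Additive.ofMul (Bform q x z)) fun x y => congrArg _ (hq.2 x y z)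

@[simp]
theorem bformHom_apply (hq : IsQuadraticForm q) (z x : A) :
    hq.bformHom z x = Additive.ofMul (Bform q x z) :=
  rfl

theorem bform_zero_left (hq : IsQuadraticForm q) (z : A) : Bform q 0 z = 1 :=
  congrArg Additive.toMul (map_zero (hq.bformHom z))

theorem bform_neg_left (hq : IsQuadraticForm q) (x z : A) : Bform q (-x) z = (Bform q x z)⁻¹ :=
  congrArg Additive.toMul (map_neg (hq.bformHom z) x)

theorem bform_sub_left (hq : IsQuadraticForm q) (x y z : A) :
    Bform q (x - y) z = Bform q x z / Bform q y z :=
  congrArg Additive.toMul (map_sub (hq.bformHom z) x y)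

theorem bform_nsmul_left (hq : IsQuadraticForm q) (n : ℕ) (x z : A) :
    Bform q (n • x) z = Bform q x z ^ n :=
  congrArg Additive.toMul (map_nsmul (hq.bformHom z) n x)

theorem bform_zsmul_left (hq : IsQuadraticForm q) (n : ℤ) (x z : A) :
    Bform q (n • x) z = Bform q x z ^ n :=
  congrArg Additive.toMul (map_zsmul (hq.bformHom z) n x)

theorem map_zero (hq : IsQuadraticForm q) : q 0 = 1 := by
  have h := hq.bform_zero_left 0
  rwa [Bform, add_zero, mul_inv_rev, mul_inv_cancel_left, inv_eq_one] at h

theorem bform_self (hq : IsQuadraticForm q) (x : A) : Bform q x x = q x ^ 2 := by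
  have h := apply_add_eq_mul_bform q x (-x)
  rw [add_neg_cancel, hq.map_zero, hq.1, bform_comm, hq.bform_neg_left, eq_comm,
    mul_inv_eq_one] at h
  rw [sq, h]

theorem map_nsmul (hq : IsQuadraticForm q) (n : ℕ) (x : A) : q (n • x) = q x ^ (n ^ 2) := by
  induction n with
  | zero => simp [hq.map_zero]
  | succ n ih =>
    rw [succ_nsmul, apply_add_eq_mul_bform q, ih, hq.bform_nsmul_left, hq.bform_self, ← pow_mul,
      ← pow_succ, ← pow_add]
    ring_nf

theorem map_zsmul_of_eq_one (hq : IsQuadraticForm q) {x : A} (hx : q x = 1) (n : ℤ) :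
    q (n • x) = 1 := by
  rcases Int.natAbs_eq n with h | h <;> rw [h]
  · rw [natCast_zsmul, hq.map_nsmul, hx, one_pow]
  · rw [neg_zsmul, hq.1, natCast_zsmul, hq.map_nsmul, hx, one_pow]

theorem pow_eq_one_of_nsmul_eq_zero (hq : IsQuadraticForm q) {n : ℕ} (hn : Odd n) {x : A}
    (hx : n • x = 0) : q x ^ n = 1 := by
  have hsq : q x ^ (n * n) = 1 := by rw [← sq, ← hq.map_nsmul, hx, hq.map_zero]
  have htwice : q x ^ (n * 2) = 1 := by
    rw [mul_comm, pow_mul, ← hq.bform_self, ← hq.bform_nsmul_left, hx, hq.bform_zero_left]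
  simpa [Nat.gcd_mul_left, hn.coprime_two_right.gcd_eq_one] using
    pow_gcd_eq_one.2 ⟨hsq, htwice⟩

theorem eq_one_of_sq_eq_one (hq : IsQuadraticForm q) {n : ℕ} (hn : Odd n) {x : A}
    (hx : n • x = 0) (hsq : q x ^ 2 = 1) : q x = 1 := by
  simpa [hn.coprime_two_right.symm.gcd_eq_one] using
    pow_gcd_eq_one.2 ⟨hsq, hq.pow_eq_one_of_nsmul_eq_zero hn hx⟩

end IsQuadraticForm

-- Reducible, so that `Maximal (IsIsotropic q)` matches the predicate spelled out in `stmt14`.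
abbrev IsIsotropic (q : A → kˣ) (K : AddSubgroup A) : Prop :=
  ∀ x ∈ K, q x = 1

theorem IsIsotropic.bform_eq_one {K : AddSubgroup A} (hK : IsIsotropic q K) {x y : A}
    (hx : x ∈ K) (hy : y ∈ K) : Bform q x y = 1 := by
  have h := hK _ (K.add_mem hx hy)
  rwa [apply_add_eq_mul_bform q, hK x hx, hK y hy, one_mul, one_mul] at h

theorem IsIsotropic.sup {H K : AddSubgroup A} (hH : IsIsotropic q H) (hK : IsIsotropic q K)
    (hHK : ∀ x ∈ H, ∀ y ∈ K, Bform q x y = 1) : IsIsotropic q (H ⊔ K) := by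
  intro z hz
  obtain ⟨x, hx, y, hy, rfl⟩ := AddSubgroup.mem_sup.1 hz
  rw [apply_add_eq_mul_bform q, hH x hx, hK y hy, hHK x hx y hy, one_mul, one_mul]

theorem isIsotropic_zmultiples (hq : IsQuadraticForm q) {x : A} (hx : q x = 1) :
    IsIsotropic q (AddSubgroup.zmultiples x) := by
  rintro _ ⟨n, rfl⟩
  exact hq.map_zsmul_of_eq_one hx n

theorem isIsotropic_bot (hq : IsQuadraticForm q) : IsIsotropic q ⊥ := by
  simpa using isIsotropic_zmultiples hq hq.map_zero

namespace IsQuadraticForm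

def orthogonal (hq : IsQuadraticForm q) (H : AddSubgroup A) : AddSubgroup A :=
  ⨅ y ∈ H, (hq.bformHom y).ker

theorem mem_orthogonal (hq : IsQuadraticForm q) {H : AddSubgroup A} {x : A} :
    x ∈ hq.orthogonal H ↔ ∀ y ∈ H, Bform q x y = 1 := by
  simp [orthogonal, AddSubgroup.mem_iInf, AddMonoidHom.mem_ker]

theorem mem_orthogonal_closure (hq : IsQuadraticForm q) {S : Set A} {x : A} :
    x ∈ hq.orthogonal (AddSubgroup.closure S) ↔ ∀ y ∈ S, Bform q x y = 1 := by
  have hker : ∀ T : Set A, (∀ y ∈ T, Bform q x y = 1) ↔ T ⊆ (hq.bformHom x).ker := by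
    simp [Set.subset_def, AddMonoidHom.mem_ker, bform_comm q x]
  rw [mem_orthogonal]
  exact (hker _).trans ((AddSubgroup.closure_le _).trans (hker S).symm)

theorem orthogonal_top (hq : IsQuadraticForm q) (hnd : Nondeg q) : hq.orthogonal ⊤ = ⊥ :=
  (AddSubgroup.eq_bot_iff_forall _).2 fun x hx =>
    hnd x fun y => hq.mem_orthogonal.1 hx y (AddSubgroup.mem_top y)

theorem iInf_maximal_isotropic_eq [Finite A] (hq : IsQuadraticForm q) (hA : Odd (Nat.card A)) :
    (⨅ H ∈ {H : AddSubgroup A | Maximal (IsIsotropic q) H}, H) =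
      AddSubgroup.closure {x : A | q x = 1} ⊓
        hq.orthogonal (AddSubgroup.closure {x : A | q x = 1}) := by
  ext r
  simp only [AddSubgroup.mem_iInf, AddSubgroup.mem_inf, Set.mem_ofPred_eq]
  constructor
  · intro hr
    obtain ⟨H₀, -, hH₀⟩ := Finite.exists_le_maximal (isIsotropic_bot hq)
    refine ⟨AddSubgroup.subset_closure (hH₀.1 r (hr H₀ hH₀)), hq.mem_orthogonal_closure.2 ?_⟩
    intro y hy
    obtain ⟨H, hyH, hH⟩ := Finite.exists_le_maximal (isIsotropic_zmultiples hq hy)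
    exact hH.1.bform_eq_one (hr H hH) (hyH (AddSubgroup.mem_zmultiples y))
  · rintro ⟨hrB, hrP⟩ H hH
    have hqr : q r = 1 := hq.eq_one_of_sq_eq_one hA card_nsmul_eq_zero'
      (hq.bform_self r ▸ hq.mem_orthogonal.1 hrP r hrB)
    have hHr : ∀ x ∈ H, ∀ y ∈ AddSubgroup.zmultiples r, Bform q x y = 1 := by
      intro x hx y hy
      have hyP := AddSubgroup.zmultiples_le_of_mem hrP hy
      rw [bform_comm]
      exact hq.mem_orthogonal.1 hyP x (AddSubgroup.subset_closure (hH.1 x hx))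
    have hle := hH.2 (hH.1.sup (isIsotropic_zmultiples hq hqr) hHr) le_sup_left
    exact hle (AddSubgroup.mem_sup_right (AddSubgroup.mem_zmultiples r))

theorem orthogonal_closure_isotropic_eq_bot {p : ℕ} [Fact p.Prime] (hp2 : p ≠ 2)
    (hpA : IsPGroup p (Multiplicative A)) (hq : IsQuadraticForm q)
    (hrad : AddSubgroup.closure {x : A | q x = 1} ⊓
      hq.orthogonal (AddSubgroup.closure {x : A | q x = 1}) = ⊥)
    {x : A} (hx0 : x ≠ 0) (hqx : q x = 1) :
    hq.orthogonal (AddSubgroup.closure {x : A | q x = 1}) = ⊥ := by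
  set B := AddSubgroup.closure {x : A | q x = 1}
  have hp : p.Prime := Fact.out
  have hrad' : ∀ z ∈ B, z ∈ hq.orthogonal B → z = 0 := fun _ =>
    AddSubgroup.disjoint_def.1 (disjoint_iff.2 hrad)
  obtain ⟨y, hqy, hxy⟩ : ∃ y, q y = 1 ∧ Bform q x y ≠ 1 := by
    by_contra! h
    exact hx0 (hrad' x (AddSubgroup.subset_closure hqx) (hq.mem_orthogonal_closure.2 h))
  refine (AddSubgroup.eq_bot_iff_forall _).2 fun c hc => by_contra fun hc0 => ?_
  obtain ⟨n, hnc0, hpnc⟩ := hpA.exists_nsmul_ne_zero_and_prime_nsmul_eq_zero hc0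
  set c' := n • c
  have hc'P : c' ∈ hq.orthogonal B := AddSubgroup.nsmul_mem _ hc n
  obtain ⟨m, hm⟩ := hpA.exists_addOrderOf_eq_prime_pow x
  obtain ⟨i, hi : Bform q x y ^ i = (q c')⁻¹⟩ : (q c')⁻¹ ∈ Subgroup.zpowers (Bform q x y) := by
    refine Units.mem_zpowers_of_pow_prime_eq_one (m := m) hp hxy ?_ ?_
    · rw [← hq.bform_nsmul_left, ← hm, addOrderOf_nsmul_eq_zero, hq.bform_zero_left]
    · rw [inv_pow, hq.pow_eq_one_of_nsmul_eq_zero (hp.odd_of_ne_two hp2) hpnc, inv_one]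
  set b := i • x + y
  have hbB : b ∈ B :=
    B.add_mem (B.zsmul_mem (AddSubgroup.subset_closure hqx) i) (AddSubgroup.subset_closure hqy)
  have hqb : q b = (q c')⁻¹ := by
    rw [apply_add_eq_mul_bform q, hq.map_zsmul_of_eq_one hqx, hqy, hq.bform_zsmul_left, hi,
      one_mul, one_mul]
  have hqbc : q (b + c') = 1 := by
    rw [apply_add_eq_mul_bform q, hqb, bform_comm, hq.mem_orthogonal.1 hc'P b hbB, mul_one,
      inv_mul_cancel]
  have hc'B : c' ∈ B := by
    simpa using B.sub_mem (AddSubgroup.subset_closure hqbc) hbB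
  exact hnc0 (hrad' c' hc'B hc'P)

theorem eq_top_of_orthogonal_eq_bot [Finite A] (hq : IsQuadraticForm q) {H : AddSubgroup A}
    (hH : hq.orthogonal H = ⊥) : H = ⊤ := by
  let χ : A → Multiplicative H →* kˣ := fun x =>
    AddMonoidHom.toMultiplicativeLeft ((hq.bformHom x).comp H.subtype)
  have hχ : Function.Injective χ := by
    intro x y hxy
    have hxy' : x - y ∈ hq.orthogonal H := hq.mem_orthogonal.2 fun b hb => by
      have : Bform q b x = Bform q b y := DFunLike.congr_fun hxy (Multiplicative.ofAdd ⟨b, hb⟩)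
      rw [hq.bform_sub_left, bform_comm q x, bform_comm q y, this, div_self']
    rw [hH] at hxy'
    exact sub_eq_zero.1 hxy'
  exact H.eq_top_of_le_card (card_le_card_of_injective_monoidHom (G := Multiplicative H) χ hχ)

end IsQuadraticForm

end QuadraticForm

theorem stmt14_general {k : Type*} [Field k]
    {A : Type*} [AddCommGroup A] [Finite A]
    (p : ℕ) (hp : p.Prime) (hodd : p ≠ 2)
    (hpA : IsPGroup p (Multiplicative A))
    (q : A → kˣ) (hq : IsQuadraticForm q) (hnd : Nondeg q) :
    (⨅ H ∈ {H : AddSubgroup A |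
        Maximal (fun K : AddSubgroup A => ∀ x ∈ K, q x = 1) H}, H) = ⊥ ↔
      (AddSubgroup.closure {x : A | q x = 1} = ⊤ ∨ ∀ x : A, x ≠ 0 → q x ≠ 1) := by
  have : Fact p.Prime := ⟨hp⟩
  have hA : Odd (Nat.card A) := by
    obtain ⟨n, hn⟩ := IsPGroup.iff_card.1 hpA
    exact hn ▸ (hp.odd_of_ne_two hodd).pow
  rw [hq.iInf_maximal_isotropic_eq hA]
  constructor
  · intro hrad
    refine or_iff_not_imp_right.2 fun hani => ?_
    obtain ⟨x, hx0, hqx⟩ : ∃ x : A, x ≠ 0 ∧ q x = 1 := by simpa using hani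
    exact hq.eq_top_of_orthogonal_eq_bot
      (hq.orthogonal_closure_isotropic_eq_bot hodd hpA hrad hx0 hqx)
  · rintro (htop | hani)
    · rw [htop, hq.orthogonal_top hnd, inf_bot_eq]
    · have hbot : AddSubgroup.closure {x : A | q x = 1} = ⊥ :=
        (AddSubgroup.closure_eq_bot_iff).2 fun x hx => by_contra fun hx0 => hani x hx0 hx
      rw [hbot, bot_inf_eq]

/-- For odd `p`, a metric `p`-group is reductive (the intersection of its maximal
isotropic subgroups is trivial) iff it is either generated by its isotropic elements
or anisotropic. -/
theorem stmt14 {k : Type*} [Field k] [CharZero k] [IsAlgClosed k]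
    {A : Type*} [AddCommGroup A] [Finite A]
    (p : ℕ) (hp : p.Prime) (hodd : p ≠ 2)
    (hpA : IsPGroup p (Multiplicative A))
    (q : A → kˣ) (hq : IsQuadraticForm q) (hnd : Nondeg q) :
    (⨅ H ∈ {H : AddSubgroup A |
        Maximal (fun K : AddSubgroup A => ∀ x ∈ K, q x = 1) H}, H) = ⊥ ↔
      (AddSubgroup.closure {x : A | q x = 1} = ⊤ ∨ ∀ x : A, x ≠ 0 → q x ≠ 1) :=
  stmt14_general p hp hodd hpA q hq hnd
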